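/- The sequence (H_m/m)_{m≥1} is strictly decreasing: for every positive integer m one has H_m/m > H_{m+1}/(m+1). -/

import Mathlib

/-
With `S_m = ∑_j C(m,j) log C(m,j)` one has `H_m = m - S_m / (2^m log 2)`, so the claim is
`2 (m+1) S_m < m S_{m+1}`. Pascal's rule and the grouping identity
`(a+b) log (a+b) = a log a + b log b + (a+b) h(a/(a+b))` for the binary entropy `h` give
`S_{m+1} = 2 S_m + E_{m+1}` with `E_k = ∑_j C(k,j) h(j/k)`, and strict concavity of `h` gives
`2 E_k < E_{k+1}`. Hence `2 S_m < m E_{m+1}` by induction on `m`, which is the claim.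
-/

open scoped BigOperators

/-- `H_m`: the Shannon entropy of the symmetric binomial distribution `B(m,1/2)`. -/
noncomputable def Hm (m : ℕ) : ℝ :=
  -∑ j ∈ Finset.range (m + 1),
    ((m.choose j : ℝ) / 2 ^ m) * Real.logb 2 ((m.choose j : ℝ) / 2 ^ m)

open Real Finset

lemma StrictConcaveOn.mul_add_mul_lt {𝕜 E : Type*} [Field 𝕜] [LinearOrder 𝕜]
    [IsStrictOrderedRing 𝕜] [AddCommGroup E] [Module 𝕜 E] {s : Set E} {f : E → 𝕜}
    (hf : StrictConcaveOn 𝕜 s f) {x y : E} (hx : x ∈ s) (hy : y ∈ s) (hxy : x ≠ y) {a b : 𝕜}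
    (ha : 0 < a) (hb : 0 < b) :
    a * f x + b * f y < (a + b) * f ((a + b)⁻¹ • (a • x + b • y)) := by
  have hab : 0 < a + b := add_pos ha hb
  have h := hf.2 hx hy hxy (div_pos ha hab) (div_pos hb hab) (by field_simp)
  rw [smul_add, smul_smul, smul_smul, ← div_eq_inv_mul, ← div_eq_inv_mul]
  calc a * f x + b * f y = (a + b) * ((a / (a + b)) • f x + (b / (a + b)) • f y) := by
        simp only [smul_eq_mul]; field_simp
    _ < _ := mul_lt_mul_of_pos_left h hab

lemma Finset.sum_range_succ_comp_succ_eq {M : Type*} [AddCommMonoid M] {f : ℕ → M} {n : ℕ}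
    (h0 : f 0 = 0) (hn : f (n + 1) = 0) :
    ∑ i ∈ range (n + 1), f (i + 1) = ∑ i ∈ range (n + 1), f i := by
  have h := sum_range_succ' f (n + 1)
  rwa [sum_range_succ, hn, h0, add_zero, add_zero, eq_comm] at h

lemma Nat.cast_choose_div_choose_succ_succ {K : Type*} [Field K] [CharZero K] {n k : ℕ}
    (hk : k ≤ n) : (n.choose k : K) / (n + 1).choose (k + 1) = (k + 1) / (n + 1) := by
  have hpos : ((n + 1).choose (k + 1) : K) ≠ 0 := by
    exact_mod_cast (Nat.choose_pos (by omega)).ne'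
  have h : ((n + 1 : ℕ) * n.choose k : K) = (n + 1).choose (k + 1) * (k + 1 : ℕ) := by
    exact_mod_cast Nat.add_one_mul_choose_eq n k
  rw [div_eq_div_iff hpos (Nat.cast_add_one_ne_zero n)]
  push_cast at h
  linear_combination h

lemma mul_log_add_eq (a b : ℝ) :
    (a + b) * log (a + b) = a * log a + b * log b + (a + b) * binEntropy (a / (a + b)) := by
  rcases eq_or_ne a 0 with rfl | ha
  · simp
  rcases eq_or_ne b 0 with rfl | hb
  · simp [ha]
  rcases eq_or_ne (a + b) 0 with hab | hab
  · rw [eq_neg_of_add_eq_zero_right hab]; simp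
  have hcompl : 1 - a / (a + b) = b / (a + b) := by field_simp; ring
  rw [binEntropy, hcompl, inv_div, inv_div, log_div hab ha, log_div hab hb]
  field_simp
  ring

noncomputable def chooseMulLogSum (m : ℕ) : ℝ :=
  ∑ j ∈ range (m + 1), (m.choose j : ℝ) * log (m.choose j)

noncomputable def chooseMulBinEntropySum (k : ℕ) : ℝ :=
  ∑ j ∈ range (k + 1), (k.choose j : ℝ) * binEntropy (j / k)

lemma chooseMulBinEntropySum_succ (k : ℕ) : chooseMulBinEntropySum (k + 1)
    = ∑ t ∈ range (k + 1), ((k + 1).choose (t + 1) : ℝ) * binEntropy ((t + 1) / (k + 1)) := by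
  rw [chooseMulBinEntropySum, sum_range_succ']
  simp

lemma chooseMulLogSum_succ (m : ℕ) :
    chooseMulLogSum (m + 1) = 2 * chooseMulLogSum m + chooseMulBinEntropySum (m + 1) := by
  set G : ℕ → ℝ := fun j ↦ (m.choose j : ℝ) * log (m.choose j)
  have hterm : ∀ t ∈ range (m + 1), ((m + 1).choose (t + 1) : ℝ) * log ((m + 1).choose (t + 1))
      = G t + G (t + 1) + ((m + 1).choose (t + 1) : ℝ) * binEntropy ((t + 1) / (m + 1)) := by
    intro t ht
    have hpascal : ((m + 1).choose (t + 1) : ℝ) = m.choose t + m.choose (t + 1) := by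
      exact_mod_cast Nat.choose_succ_succ' m t
    rw [hpascal, mul_log_add_eq, ← hpascal,
      Nat.cast_choose_div_choose_succ_succ (Nat.lt_succ_iff.mp (mem_range.mp ht))]
  have hshift : ∑ t ∈ range (m + 1), G (t + 1) = chooseMulLogSum m :=
    sum_range_succ_comp_succ_eq (by simp [G]) (by simp [G])
  calc chooseMulLogSum (m + 1)
      = ∑ t ∈ range (m + 1), ((m + 1).choose (t + 1) : ℝ) * log ((m + 1).choose (t + 1)) := by
        rw [chooseMulLogSum, sum_range_succ']
        simp
    _ = ∑ t ∈ range (m + 1), (G t + G (t + 1)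
          + ((m + 1).choose (t + 1) : ℝ) * binEntropy ((t + 1) / (m + 1))) :=
        sum_congr rfl hterm
    _ = chooseMulLogSum m + chooseMulLogSum m + chooseMulBinEntropySum (m + 1) := by
        rw [sum_add_distrib, sum_add_distrib, hshift, chooseMulBinEntropySum_succ]
        rfl
    _ = 2 * chooseMulLogSum m + chooseMulBinEntropySum (m + 1) := by ring

/- Strict concavity of `binEntropy`: `(t+1)/(k+1)` is the mean of `t/k` and `(t+1)/k` weighted by
`C(k,t)` and `C(k,t+1)`, whose sum is `C(k+1,t+1)`. -/
lemma choose_mul_binEntropy_add_lt {k t : ℕ} (ht : t < k) :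
    (k.choose t : ℝ) * binEntropy (t / k) + (k.choose (t + 1) : ℝ) * binEntropy ((t + 1) / k)
      < ((k + 1).choose (t + 1) : ℝ) * binEntropy ((t + 1) / (k + 1)) := by
  have hk : (0 : ℝ) < k := by exact_mod_cast (Nat.zero_le t).trans_lt ht
  have htk : (t + 1 : ℝ) ≤ k := by exact_mod_cast ht
  have hpascal : ((k + 1).choose (t + 1) : ℝ) = k.choose t + k.choose (t + 1) := by
    exact_mod_cast Nat.choose_succ_succ' k t
  have hweights : (k.choose (t + 1) : ℝ) * (t + 1) = k.choose t * (k - t) := by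
    have h := Nat.choose_succ_right_eq k t
    rw [← Nat.cast_inj (R := ℝ)] at h
    push_cast [Nat.cast_sub ht.le] at h
    exact h
  have hmean : ((k.choose t : ℝ) + k.choose (t + 1))⁻¹
      • ((k.choose t : ℝ) • ((t : ℝ) / k) + (k.choose (t + 1) : ℝ) • (((t : ℝ) + 1) / k))
        = ((t : ℝ) + 1) / (k + 1) := by
    rw [← hpascal, ← Nat.cast_choose_div_choose_succ_succ ht.le, smul_eq_mul, inv_mul_eq_div,
      smul_eq_mul, smul_eq_mul]
    congr 1
    field_simp
    linear_combination hweights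
  have hconcave := strictConcave_binEntropy.mul_add_mul_lt
    (x := (t : ℝ) / k) (y := ((t : ℝ) + 1) / k)
    ⟨by positivity, (div_le_one hk).2 (by linarith)⟩
    ⟨by positivity, (div_le_one hk).2 (by linarith)⟩
    (by rw [Ne, div_left_inj' hk.ne']; linarith)
    (a := k.choose t) (b := k.choose (t + 1))
    (by exact_mod_cast Nat.choose_pos (by omega)) (by exact_mod_cast Nat.choose_pos ht)
  rwa [hmean, ← hpascal] at hconcave

lemma two_mul_chooseMulBinEntropySum_lt {k : ℕ} (hk : 1 ≤ k) :
    2 * chooseMulBinEntropySum k < chooseMulBinEntropySum (k + 1) := by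
  set B : ℕ → ℝ := fun j ↦ (k.choose j : ℝ) * binEntropy (j / k)
  have hshift : ∑ t ∈ range (k + 1), B (t + 1) = chooseMulBinEntropySum k :=
    sum_range_succ_comp_succ_eq (by simp [B]) (by simp [B])
  have hle : ∀ t ∈ range (k + 1), B t + B (t + 1)
      ≤ ((k + 1).choose (t + 1) : ℝ) * binEntropy ((t + 1) / (k + 1)) := by
    intro t ht
    rcases (Nat.lt_succ_iff.mp (mem_range.mp ht)).lt_or_eq with ht | rfl
    · exact_mod_cast (choose_mul_binEntropy_add_lt ht).le
    · simp [B, (Nat.cast_add_one_pos t).ne', Nat.cast_ne_zero.2 (by omega : t ≠ 0)]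
  calc 2 * chooseMulBinEntropySum k = ∑ t ∈ range (k + 1), (B t + B (t + 1)) := by
        rw [sum_add_distrib, hshift, two_mul]; rfl
    _ < ∑ t ∈ range (k + 1), ((k + 1).choose (t + 1) : ℝ) * binEntropy ((t + 1) / (k + 1)) :=
        sum_lt_sum hle ⟨0, by simp, by simpa [B] using choose_mul_binEntropy_add_lt hk⟩
    _ = chooseMulBinEntropySum (k + 1) := (chooseMulBinEntropySum_succ k).symm

lemma two_mul_chooseMulLogSum_lt {m : ℕ} (hm : 1 ≤ m) :
    2 * chooseMulLogSum m < m * chooseMulBinEntropySum (m + 1) := by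
  induction m, hm using Nat.le_induction with
  | base =>
    have hS : chooseMulLogSum 1 = 0 := by simp [chooseMulLogSum, sum_range_succ]
    have hE : chooseMulBinEntropySum 1 = 0 := by simp [chooseMulBinEntropySum, sum_range_succ]
    simpa [hS, hE] using two_mul_chooseMulBinEntropySum_lt le_rfl
  | succ n hn ih =>
    calc 2 * chooseMulLogSum (n + 1)
        = 2 * (2 * chooseMulLogSum n) + 2 * chooseMulBinEntropySum (n + 1) := by
          rw [chooseMulLogSum_succ]; ring
      _ < 2 * (n * chooseMulBinEntropySum (n + 1)) + 2 * chooseMulBinEntropySum (n + 1) := by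
          gcongr
      _ = (n + 1) * (2 * chooseMulBinEntropySum (n + 1)) := by ring
      _ < (n + 1) * chooseMulBinEntropySum (n + 1 + 1) := by
          gcongr
          exact two_mul_chooseMulBinEntropySum_lt (by omega)
      _ = ((n + 1 : ℕ) : ℝ) * chooseMulBinEntropySum (n + 1 + 1) := by rw [Nat.cast_succ]

lemma chooseMulLogSum_div_lt {m : ℕ} (hm : 1 ≤ m) :
    chooseMulLogSum m / (m * 2 ^ m)
      < chooseMulLogSum (m + 1) / ((m + 1) * 2 ^ (m + 1)) := by
  have hm' : (0 : ℝ) < m := by exact_mod_cast hm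
  have key : 2 * (m + 1) * chooseMulLogSum m < m * chooseMulLogSum (m + 1) := by
    rw [chooseMulLogSum_succ]
    linarith [two_mul_chooseMulLogSum_lt hm]
  rw [div_lt_div_iff₀ (by positivity) (by positivity), pow_succ]
  linarith [mul_lt_mul_of_pos_left key (pow_pos two_pos m : (0 : ℝ) < 2 ^ m)]

lemma Hm_eq (m : ℕ) : Hm m = m - chooseMulLogSum m / 2 ^ m / log 2 := by
  have hterm : ∀ j ∈ range (m + 1),
      (m.choose j : ℝ) / 2 ^ m * logb 2 ((m.choose j : ℝ) / 2 ^ m)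
        = (m.choose j : ℝ) * log (m.choose j) / 2 ^ m / log 2 - m.choose j / 2 ^ m * m := by
    intro j hj
    have hC : (m.choose j : ℝ) ≠ 0 := by
      exact_mod_cast (Nat.choose_pos (Nat.lt_succ_iff.mp (mem_range.mp hj))).ne'
    rw [logb, log_div hC (by positivity), log_pow]
    field_simp
  have hsum : ∑ j ∈ range (m + 1), (m.choose j : ℝ) = 2 ^ m := by
    exact_mod_cast Nat.sum_range_choose m
  rw [Hm, sum_congr rfl hterm, sum_sub_distrib, ← sum_div, ← sum_div, ← sum_mul, ← sum_div, hsum,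
    ← chooseMulLogSum]
  field_simp
  ring

lemma Hm_div_eq {m : ℕ} (hm : m ≠ 0) :
    Hm m / m = 1 - chooseMulLogSum m / (m * 2 ^ m) / log 2 := by
  have hm' : (m : ℝ) ≠ 0 := by exact_mod_cast hm
  rw [Hm_eq]
  field_simp

theorem binomial_entropy_ratio_strict_anti (m : ℕ) (hm : 1 ≤ m) :
    Hm (m + 1) / ((m : ℝ) + 1) < Hm m / (m : ℝ) := by
  have hsucc := Hm_div_eq m.add_one_ne_zero
  push_cast at hsucc
  rw [hsucc, Hm_div_eq (by omega)]
  gcongr 1 - ?_ / _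
  exact chooseMulLogSum_div_lt hm
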